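/- arXiv:1807.00658 — 7 statements merged into one kernel-verified Lean document; each statement's English description precedes it below -/
import Mathlib

section
/- Let C and D be objects of a category C that are hom-equivalent, i.e., Hom(C,D) ≠ ∅ and Hom(D,C) ≠ ∅. Then for every object A with Hom(A,C) ≠ ∅ and every positive integer t: A has big Ramsey degree t in C if and only if A has big Ramsey degree t in D; in particular A has finite big Ramsey degree in C if and only if it has finite big Ramsey degree in D, and then the degrees coincide. -/
open CategoryTheory

universe v u

/-- `ramseyArrow A B X k t` means `X ⟶ (B)^A_{k,t}`. -/
def ramseyArrow {C : Type u} [Category.{v} C] (A B X : C) (k t : ℕ) : Prop :=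
  ∀ χ : (A ⟶ X) → Fin k, ∃ w : B ⟶ X,
    (χ '' (Set.range fun f : A ⟶ B => f ≫ w)).ncard ≤ t

/-- `t` is the big Ramsey degree of `A` in `X`: `t` is the least positive integer
such that `X ⟶ (X)^A_{k,t}` for every `k ≥ 2`. -/
def isBigRamseyDegree {C : Type u} [Category.{v} C] (A X : C) (t : ℕ) : Prop :=
  1 ≤ t ∧ (∀ k, 2 ≤ k → ramseyArrow A X X k t) ∧
    ∀ t', 1 ≤ t' → (∀ k, 2 ≤ k → ramseyArrow A X X k t') → t ≤ t'

theorem stmt2 {C : Type u} [Category.{v} C] (X Y : C)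
    (h₁ : Nonempty (X ⟶ Y)) (h₂ : Nonempty (Y ⟶ X))
    (A : C) (hA : Nonempty (A ⟶ X)) (t : ℕ) (ht : 1 ≤ t) :
    isBigRamseyDegree A X t ↔ isBigRamseyDegree A Y t := by
  obtain ⟨v⟩ := h₁; obtain ⟨u⟩ := h₂
  have key : ∀ (P Q : C) (u' : Q ⟶ P) (v' : P ⟶ Q) (k s : ℕ),
      ramseyArrow A P P k s → ramseyArrow A Q Q k s := by
    intro P Q u' v' k s h χ
    obtain ⟨w, hw⟩ := h (fun f => χ (f ≫ v'))
    refine ⟨u' ≫ w ≫ v', le_trans (Set.ncard_le_ncard ?_ (Set.toFinite _)) hw⟩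
    rintro x ⟨f, ⟨g, rfl⟩, rfl⟩
    exact ⟨(g ≫ u') ≫ w, ⟨g ≫ u', rfl⟩, by simp⟩
  constructor
  · rintro ⟨h1, h2, h3⟩
    exact ⟨h1, fun k hk => key X Y u v k t (h2 k hk),
      fun t' ht' h' => h3 t' ht' fun k hk => key Y X v u k t' (h' k hk)⟩
  · rintro ⟨h1, h2, h3⟩
    exact ⟨h1, fun k hk => key Y X v u k t (h2 k hk),
      fun t' ht' h' => h3 t' ht' fun k hk => key X Y u v k t' (h' k hk)⟩
end

section
/- Let Θ be a relational language, let F be a countably infinite ultrahomogeneous Θ-structure whose age has the strong amalgamation property, and let ⊏ be a linear order on the universe of F of order type ω. Let K be the class of all structures (A,≺) where A is a Θ-structure that embeds into F and ≺ is a linear order on the universe of A such that (A,≺) is finite or has order type ω. Then a structure (A,≺) (A a finite or countably infinite Θ-structure, ≺ a linear order on its universe) embeds into (F,⊏) — via a map that is simultaneously a Θ-embedding A → F and strictly increasing from ≺ to ⊏ — if and only if (A,≺) ∈ K. -/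
open FirstOrder

/-- A bundled finite structure for the language `L`. -/
structure FinStruc (L : Language) where
  carrier : Type
  [str : L.Structure carrier]
  fin : Finite carrier

attribute [instance] FinStruc.str

namespace StmtAux

open Language

variable {L : Language} [L.IsRelational]

noncomputable instance setStructure {M : Type*} [L.Structure M] (s : Set M) :
    L.Structure s where
  funMap f _ := isEmptyElim f
  RelMap r x := Structure.RelMap r fun i => (x i : M)

/-- Inclusion of a set as an `L`-embedding. -/
def valEmb {M : Type*} [L.Structure M] (s : Set M) : s ↪[L] M where
  toFun := Subtype.val
  inj' := Subtype.val_injective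
  map_fun' f _ := isEmptyElim f
  map_rel' _ _ := Iff.rfl

def inclEmb {M : Type*} [L.Structure M] {s t : Set M} (h : s ⊆ t) : s ↪[L] t where
  toFun x := ⟨x.1, h x.2⟩
  inj' _ _ hxy := Subtype.ext (congrArg Subtype.val hxy :)
  map_fun' f _ := isEmptyElim f
  map_rel' _ _ := Iff.rfl

def dropEmb {M : Type*} [L.Structure M] {t : Set M} (u : Set M) :
    ({x : t | (x : M) ∈ u} : Set t) ↪[L] u where
  toFun x := ⟨x.1.1, x.2⟩
  inj' _ _ hxy := Subtype.ext (Subtype.ext (congrArg Subtype.val hxy :))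
  map_fun' f _ := isEmptyElim f
  map_rel' _ _ := Iff.rfl

theorem extend_one (F : Type) [L.Structure F]
    (ultra : ∀ (A : Type) [L.Structure A], Finite A → Nonempty (A ↪[L] F) →
      ∀ f g : A ↪[L] F, ∃ h : F ≃[L] F, ∀ a : A, f a = h (g a))
    (sap : ∀ (A B C : Type) [L.Structure A] [L.Structure B] [L.Structure C],
      Finite A → Finite B → Finite C →
      Nonempty (A ↪[L] F) → Nonempty (B ↪[L] F) → Nonempty (C ↪[L] F) →
      ∀ (f : A ↪[L] B) (g : A ↪[L] C),
        ∃ D : FinStruc L, Nonempty (D.carrier ↪[L] F) ∧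
          ∃ (f' : B ↪[L] D.carrier) (g' : C ↪[L] D.carrier),
            (∀ a : A, f' (f a) = g' (g a)) ∧
            (Set.range fun b => f' b) ∩ (Set.range fun c => g' c) =
              (Set.range fun a : A => f' (f a)) ∧
            (Set.range fun b => f' b) ∩ (Set.range fun c => g' c) =
              (Set.range fun a : A => g' (g a)))
    (e : F ≃ ℕ)
    (C : Type) [L.Structure C] [Finite C]
    (hCF : Nonempty (C ↪[L] F)) (s : Set C) (c₀ : C) (hc₀ : c₀ ∉ s)
    (k : s ↪[L] F) (N : ℕ) :
    ∃ k' : C ↪[L] F, (∀ x : s, k' x = k x) ∧ N < e (k' c₀) := by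
  classical
  set T : Set F := {y | e y ≤ N} with hT
  have hTfin : T.Finite := (Set.finite_Iic N).preimage e.injective.injOn
  set X : Set F := (Set.range fun x : s => k x) ∪ T with hX
  have hXfin : X.Finite := (Set.finite_range _).union hTfin
  haveI : Finite X := hXfin.to_subtype
  let fAB : s ↪[L] X :=
    { toFun := fun x => ⟨k x, Or.inl ⟨x, rfl⟩⟩
      inj' := fun x y hxy => k.injective (congrArg Subtype.val hxy :)
      map_fun' := fun f _ => isEmptyElim f
      map_rel' := fun r x => k.map_rel' r x }
  obtain ⟨D, ⟨jD⟩, f', g', hcomm, hint1, hint2⟩ :=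
    sap s X C inferInstance inferInstance inferInstance ⟨k⟩ ⟨valEmb X⟩ hCF fAB (valEmb s)
  haveI := D.fin
  obtain ⟨h, hh⟩ := ultra X inferInstance ⟨valEmb X⟩ (valEmb X) (jD.comp f')
  refine ⟨h.toEmbedding.comp (jD.comp g'), ?_, ?_⟩
  · intro x
    have h1 : f' (fAB x) = g' (valEmb s x) := hcomm x
    calc h.toEmbedding.comp (jD.comp g') ↑x = h (jD (g' ↑x)) := rfl
      _ = h (jD (f' (fAB x))) := by rw [h1]; rfl
      _ = valEmb X (fAB x) := (hh (fAB x)).symm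
      _ = k x := rfl
  · by_contra hle
    push_neg at hle
    set c := h.toEmbedding.comp (jD.comp g') c₀ with hc
    have htX : c ∈ X := Or.inr hle
    have h2 : (⟨c, htX⟩ : X).val = h (jD (f' ⟨c, htX⟩)) := hh ⟨c, htX⟩
    have h3 : g' c₀ = f' ⟨c, htX⟩ := by
      apply jD.injective
      apply h.injective
      calc h (jD (g' c₀)) = c := rfl
        _ = h (jD (f' ⟨c, htX⟩)) := h2
    have h4 : g' c₀ ∈ (Set.range fun b : X => f' b) ∩ (Set.range fun c : C => g' c) :=
      ⟨⟨⟨c, htX⟩, h3.symm⟩, ⟨c₀, rfl⟩⟩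
    rw [hint2] at h4
    obtain ⟨a, ha⟩ := h4
    exact hc₀ (g'.injective ha ▸ a.2)

theorem build (F : Type) [L.Structure F]
    (ultra : ∀ (A : Type) [L.Structure A], Finite A → Nonempty (A ↪[L] F) →
      ∀ f g : A ↪[L] F, ∃ h : F ≃[L] F, ∀ a : A, f a = h (g a))
    (sap : ∀ (A B C : Type) [L.Structure A] [L.Structure B] [L.Structure C],
      Finite A → Finite B → Finite C →
      Nonempty (A ↪[L] F) → Nonempty (B ↪[L] F) → Nonempty (C ↪[L] F) →
      ∀ (f : A ↪[L] B) (g : A ↪[L] C),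
        ∃ D : FinStruc L, Nonempty (D.carrier ↪[L] F) ∧
          ∃ (f' : B ↪[L] D.carrier) (g' : C ↪[L] D.carrier),
            (∀ a : A, f' (f a) = g' (g a)) ∧
            (Set.range fun b => f' b) ∩ (Set.range fun c => g' c) =
              (Set.range fun a : A => f' (f a)) ∧
            (Set.range fun b => f' b) ∩ (Set.range fun c => g' c) =
              (Set.range fun a : A => g' (g a)))
    (e : F ≃ ℕ)
    (A : Type) [L.Structure A] (h0 : A ↪[L] F)
    (idx : A → ℕ) (hidx : Function.Injective idx) :
    ∃ f : A ↪[L] F, ∀ x y : A, idx x < idx y → e (f x) < e (f y) := by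
  classical
  set S : ℕ → Set A := fun n => {x | idx x < n} with hS
  have hSsub : ∀ {m n : ℕ}, m ≤ n → S m ⊆ S n := fun h x hx => lt_of_lt_of_le hx h
  have hSfin : ∀ n, (S n).Finite := fun n => (Set.finite_Iio n).preimage hidx.injOn
  have hstep : ∀ n (f : (S n : Set A) ↪[L] F),
      ∃ f' : (S (n+1) : Set A) ↪[L] F,
        (∀ (x : A) (hx : x ∈ S n) (hx' : x ∈ S (n+1)), f' ⟨x, hx'⟩ = f ⟨x, hx⟩) ∧
        (∀ (y : A) (hy : idx y = n), ∀ x : (S n : Set A),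
          e (f x) < e (f' ⟨y, by simp [hS, hy]⟩)) := by
    intro n f
    by_cases hex : ∃ y, idx y = n
    · obtain ⟨y, hy⟩ := hex
      haveI : Finite (S (n+1) : Set A) := (hSfin (n+1)).to_subtype
      haveI : Fintype (S n : Set A) := (hSfin n).fintype
      set s : Set (S (n+1) : Set A) := {x | (x : A) ∈ S n} with hs
      have hyy : y ∈ S (n+1) := by simp [hS, hy]
      have hc₀ : (⟨y, hyy⟩ : (S (n+1) : Set A)) ∉ s := by simp [hs, hS, hy]
      set k : s ↪[L] F := f.comp (dropEmb (S n)) with hk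
      set N : ℕ := Finset.univ.sup (fun x : (S n : Set A) => e (f x)) with hN
      obtain ⟨k', hk'1, hk'2⟩ := extend_one F ultra sap e (S (n+1) : Set A)
        ⟨h0.comp (valEmb _)⟩ s ⟨y, hyy⟩ hc₀ k N
      refine ⟨k', ?_, ?_⟩
      · intro x hx hx'
        exact hk'1 ⟨⟨x, hx'⟩, hx⟩
      · intro y' hy' x
        have hyy' : y' = y := hidx (hy'.trans hy.symm)
        subst hyy'
        have h1 : e (f x) ≤ N := by
          rw [hN]; exact Finset.le_sup (f := fun x : (S n : Set A) => e (f x)) (Finset.mem_univ x)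
        exact lt_of_le_of_lt h1 hk'2
    · push_neg at hex
      have hsub : S (n+1) ⊆ S n := by
        intro x hx
        have h1 : idx x < n + 1 := hx
        have h2 : idx x ≠ n := hex x
        exact show idx x < n by omega
      refine ⟨f.comp (inclEmb hsub), ?_, ?_⟩
      · intro x hx hx'; rfl
      · intro y hy; exact absurd hy (hex y)
  choose step hstep1 hstep2 using hstep
  obtain ⟨fseq, hfsucc⟩ :
      ∃ fseq : ∀ n, (S n : Set A) ↪[L] F, ∀ n, fseq (n+1) = step n (fseq n) :=
    ⟨fun n => Nat.rec (h0.comp (valEmb (S 0))) (fun n fn => step n fn) n, fun n => rfl⟩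
  have coh : ∀ m n (h : n ≤ m) (x : A) (hx : x ∈ S n),
      fseq m ⟨x, hSsub h hx⟩ = fseq n ⟨x, hx⟩ := by
    intro m
    induction m with
    | zero => intro n h x hx; obtain rfl : n = 0 := Nat.le_zero.mp h; rfl
    | succ m ih =>
      intro n h x hx
      rcases Nat.eq_or_lt_of_le h with h1 | h1
      · subst h1; rfl
      · have hn : n ≤ m := by omega
        have hxm : x ∈ S m := hSsub hn hx
        calc fseq (m+1) ⟨x, hSsub h hx⟩ = fseq m ⟨x, hxm⟩ := by
              rw [hfsucc m]; exact hstep1 m (fseq m) x hxm _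
          _ = fseq n ⟨x, hx⟩ := ih n hn x hx
  have hxmem : ∀ x : A, x ∈ S (idx x + 1) := fun x => Nat.lt_succ_self _
  set f : A → F := fun x => fseq (idx x + 1) ⟨x, hxmem x⟩ with hf
  have mono : ∀ x y : A, idx x < idx y → e (f x) < e (f y) := by
    intro x y hxy
    have hxj : x ∈ S (idx y) := hxy
    have h2 : e (fseq (idx y) ⟨x, hxj⟩) < e (fseq (idx y + 1) ⟨y, hxmem y⟩) := by
      rw [hfsucc (idx y)]
      exact hstep2 (idx y) (fseq (idx y)) y rfl ⟨x, hxj⟩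
    have h1 : fseq (idx y) ⟨x, hxj⟩ = f x := coh (idx y) (idx x + 1) (by omega) x (hxmem x)
    show e (f x) < e (fseq (idx y + 1) ⟨y, hxmem y⟩)
    rw [← h1]
    exact h2
  refine ⟨⟨⟨f, ?_⟩, ?_, ?_⟩, mono⟩
  · intro x y hxy
    by_contra hne
    have : idx x ≠ idx y := fun h => hne (hidx h)
    rcases Nat.lt_or_ge (idx x) (idx y) with h | h
    · exact absurd (congrArg e hxy) (Nat.ne_of_lt (mono x y h))
    · have h' : idx y < idx x := by omega
      exact absurd (congrArg e hxy.symm) (Nat.ne_of_lt (mono y x h'))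
  · intro n fn x; exact isEmptyElim fn
  · intro n r t
    set m : ℕ := (Finset.univ.sup fun i => idx (t i)) + 1 with hm
    have hmem : ∀ i, t i ∈ S m := by
      intro i
      have : idx (t i) ≤ Finset.univ.sup fun i => idx (t i) :=
        Finset.le_sup (f := fun i => idx (t i)) (Finset.mem_univ i)
      exact show idx (t i) < m by omega
    have heq : (fun i => f (t i)) = fun i => fseq m ⟨t i, hmem i⟩ := by
      funext i
      exact (coh m (idx (t i) + 1) (by
        have : idx (t i) ≤ Finset.univ.sup fun i => idx (t i) :=
          Finset.le_sup (f := fun i => idx (t i)) (Finset.mem_univ i)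
        omega) (t i) (hxmem (t i))).symm
    show Structure.RelMap r (f ∘ t) ↔ Structure.RelMap r t
    have := (fseq m).map_rel' r (fun i => ⟨t i, hmem i⟩)
    calc Structure.RelMap r (f ∘ t)
        = Structure.RelMap r (fun i => fseq m ⟨t i, hmem i⟩) := by
          show Structure.RelMap r (fun i => f (t i)) = _; rw [heq]
      _ ↔ Structure.RelMap r (fun i : Fin n => (⟨t i, hmem i⟩ : (S m : Set A))) := this
      _ ↔ Structure.RelMap r t := Iff.rfl


end StmtAux

theorem stmt6 {L : Language} [L.IsRelational]
    (F : Type) [L.Structure F] [Countable F] [Infinite F]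
    -- `F` is ultrahomogeneous
    (ultra : ∀ (A : Type) [L.Structure A], Finite A → Nonempty (A ↪[L] F) →
      ∀ f g : A ↪[L] F, ∃ h : F ≃[L] F, ∀ a : A, f a = h (g a))
    -- the age of `F` has the strong amalgamation property
    (sap : ∀ (A B C : Type) [L.Structure A] [L.Structure B] [L.Structure C],
      Finite A → Finite B → Finite C →
      Nonempty (A ↪[L] F) → Nonempty (B ↪[L] F) → Nonempty (C ↪[L] F) →
      ∀ (f : A ↪[L] B) (g : A ↪[L] C),
        ∃ D : FinStruc L, Nonempty (D.carrier ↪[L] F) ∧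
          ∃ (f' : B ↪[L] D.carrier) (g' : C ↪[L] D.carrier),
            (∀ a : A, f' (f a) = g' (g a)) ∧
            (Set.range fun b => f' b) ∩ (Set.range fun c => g' c) =
              (Set.range fun a : A => f' (f a)) ∧
            (Set.range fun b => f' b) ∩ (Set.range fun c => g' c) =
              (Set.range fun a : A => g' (g a)))
    -- `⊏` is a linear order on `F` of order type `ω`
    (ltF : F → F → Prop) (hltF : IsStrictTotalOrder F ltF)
    (homega : ∃ e : F ≃ ℕ, ∀ x y : F, ltF x y ↔ e x < e y)
    -- `(A, ≺)`: a finite or countably infinite structure with a linear order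
    (A : Type) [L.Structure A] (hAc : Countable A)
    (pa : A → A → Prop) (hpa : IsStrictTotalOrder A pa) :
    -- `(A,≺)` embeds into `(F,⊏)` iff `(A,≺) ∈ K`
    (∃ f : A ↪[L] F, ∀ x y : A, pa x y → ltF (f x) (f y)) ↔
      (Nonempty (A ↪[L] F) ∧
        (Finite A ∨ ∃ e : A ≃ ℕ, ∀ x y : A, pa x y ↔ e x < e y)) := by
  classical
  haveI := hpa
  obtain ⟨eF, heF⟩ := homega
  constructor
  · rintro ⟨f, hf⟩
    refine ⟨⟨f⟩, ?_⟩
    by_cases hfin : Finite A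
    · exact Or.inl hfin
    · right
      haveI : Infinite A := not_finite_iff_infinite.mp hfin
      letI lin : LinearOrder A := linearOrderOfSTO pa
      set g : A → ℕ := fun x => eF (f x) with hg
      have hgm : StrictMono g := fun x y h => (heF _ _).mp (hf x y h)
      let i1 : A ≃o Set.range g := StrictMono.orderIso g hgm
      haveI : Infinite (Set.range g) :=
        Set.infinite_coe_iff.mpr (Set.infinite_range_of_injective hgm.injective)
      let i2 : ℕ ≃o Set.range g := Nat.Subtype.orderIsoOfNat (Set.range g)
      let i3 : A ≃o ℕ := i1.trans i2.symm
      refine ⟨i3.toEquiv, fun x y => ?_⟩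
      show pa x y ↔ i3 x < i3 y
      exact Iff.trans (Iff.rfl : pa x y ↔ x < y) i3.lt_iff_lt.symm
  · rintro ⟨⟨h0⟩, hcase⟩
    have hidx : ∃ idx : A → ℕ, Function.Injective idx ∧ ∀ x y, pa x y → idx x < idx y := by
      rcases hcase with hfin | ⟨eA, heA⟩
      · haveI := hfin
        haveI := Fintype.ofFinite A
        letI lin : LinearOrder A := linearOrderOfSTO pa
        let iso : Fin (Fintype.card A) ≃o A := monoEquivOfFin A rfl
        refine ⟨fun x => (iso.symm x : ℕ), ?_, ?_⟩
        · exact fun x y h => iso.symm.injective (Fin.val_injective h)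
        · intro x y h
          exact iso.symm.lt_iff_lt.mpr (h : x < y)
      · exact ⟨eA, eA.injective, fun x y h => (heA x y).mp h⟩
    obtain ⟨idx, hinj, hmono⟩ := hidx
    obtain ⟨f, hf⟩ := StmtAux.build F ultra sap eF A h0 idx hinj
    exact ⟨f, fun x y hxy => (heF _ _).mpr (hf x y (hmono x y hxy))⟩
end

section
/- Let Θ be a relational language, let F be a countably infinite ultrahomogeneous Θ-structure whose age has the strong amalgamation property, and let ⊏ be a linear order on the universe of F of order type ω. Let (A,≺) be a structure such that A embeds into F and ≺ is a linear order on the universe of A with (A,≺) finite or of order type ω. Then for every positive integer t: if F ⟶ (F)^A_{k,t} holds for all k ≥ 2 (colorings of Θ-embeddings A → F, with witnesses among Θ-embeddings F → F), then (F,⊏) ⟶ ((F,⊏))^{(A,≺)}_{k,t} holds for all k ≥ 2 (colorings of order-preserving Θ-embeddings (A,≺) → (F,⊏), with witnesses among order-preserving Θ-embeddings (F,⊏) → (F,⊏)). In particular, if A has finite big Ramsey degree T(A,F) in F, then (A,≺) has finite big Ramsey degree in (F,⊏) and T((A,≺),(F,⊏)) ≤ T(A,F). -/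
/-!
Extend a colouring of the order-preserving copies of `(A, ≺)` arbitrarily to all copies of `A`
and take `w : F ↪ F` from the Ramsey property of `A` in `F`. It suffices to find a self-embedding
`g` of `F` such that `w ∘ g` is order-preserving: every order-preserving copy `w ∘ g ∘ f` of
`(A, ≺)` is then the copy `w ∘ (g ∘ f)` of `A` inside `w`, with the same colour.

Such a `g` is built point by point along the enumeration of `F`. By ultrahomogeneity every finite
partial isomorphism extends by one more point, and strong amalgamation (over the finite part
already built) makes the set of possible images of the new point infinite, so that image can be
chosen beyond everything chosen so far in the order pulled back along `w`.
-/

open FirstOrder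

theorem Fin.strictMono_snoc {α : Type*} [Preorder α] {n : ℕ} {f : Fin n → α}
    (hf : StrictMono f) {x : α} (hx : ∀ i, f i < x) :
    StrictMono (Fin.snoc f x : Fin (n + 1) → α) := by
  intro i j hij
  induction j using Fin.lastCases with
  | last =>
    induction i using Fin.lastCases with
    | last => exact absurd hij (lt_irrefl _)
    | cast i => simpa using hx i
  | cast j =>
    induction i using Fin.lastCases with
    | last => exact absurd hij (not_lt.2 (Fin.castSucc_lt_last j).le)
    | cast i => simpa using hf (Fin.castSucc_lt_castSucc_iff.1 hij)

theorem exists_seq_of_forall_exists_snoc {α : Type*} (P : ∀ n, (Fin n → α) → Prop)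
    (h0 : P 0 Fin.elim0) (hstep : ∀ n v, P n v → ∃ x, P (n + 1) (Fin.snoc v x)) :
    ∃ u : ℕ → α, ∀ n, P n fun i => u i := by
  choose next hnext using hstep
  let U : ∀ n, {v // P n v} :=
    fun n => Nat.rec ⟨Fin.elim0, h0⟩ (fun n v => ⟨_, hnext n v.1 v.2⟩) n
  let u : ℕ → α := fun i => (U (i + 1)).1 (Fin.last i)
  refine ⟨u, fun n => ?_⟩
  suffices h : (U n).1 = fun i : Fin n => u i from h ▸ (U n).2
  induction n with
  | zero => exact funext fun i => i.elim0
  | succ n ih =>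
    have hU : (U (n + 1)).1 = Fin.snoc (U n).1 (next n (U n).1 (U n).2) := rfl
    funext i
    refine Fin.lastCases rfl (fun j => ?_) i
    rw [hU, Fin.snoc_castSucc, ih]
    rfl

namespace FirstOrder.Language

open Structure Substructure

variable {L : Language} {M N P : Type*} [L.Structure M] [L.Structure N] [L.Structure P]
  {ι κ : Type*}

variable (L) in
def SameQFType (a : ι → M) (b : ι → N) : Prop :=
  (∀ i j, a i = a j ↔ b i = b j) ∧
    ∀ {m} (R : L.Relations m) (t : Fin m → ι), RelMap R (a ∘ t) ↔ RelMap R (b ∘ t)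

namespace SameQFType

variable {a : ι → M} {b : ι → N} {c : ι → P}

theorem symm (h : L.SameQFType a b) : L.SameQFType b a :=
  ⟨fun i j => (h.1 i j).symm, fun R t => (h.2 R t).symm⟩

theorem trans (hab : L.SameQFType a b) (hbc : L.SameQFType b c) : L.SameQFType a c :=
  ⟨fun i j => (hab.1 i j).trans (hbc.1 i j), fun R t => (hab.2 R t).trans (hbc.2 R t)⟩

theorem comp (h : L.SameQFType a b) (σ : κ → ι) : L.SameQFType (a ∘ σ) (b ∘ σ) :=
  ⟨fun i j => h.1 (σ i) (σ j), fun R t => h.2 R (σ ∘ t)⟩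

theorem injective (h : L.SameQFType a b) (ha : Function.Injective a) : Function.Injective b :=
  fun i j hij => ha ((h.1 i j).2 hij)

end SameQFType

theorem sameQFType_of_forall_fin {a : ℕ → M} {b : ℕ → N}
    (h : ∀ n, L.SameQFType (fun i : Fin n => a i) (fun i : Fin n => b i)) :
    L.SameQFType a b := by
  refine ⟨fun i j => (h (max i j + 1)).1 ⟨i, by omega⟩ ⟨j, by omega⟩, fun R t => ?_⟩
  exact (h (Finset.univ.sup t + 1)).2 R
    fun k => ⟨t k, Nat.lt_succ_of_le (Finset.le_sup (Finset.mem_univ k))⟩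

theorem Embedding.sameQFType_comp (φ : M ↪[L] N) (a : ι → M) : L.SameQFType a (φ ∘ a) :=
  ⟨fun _ _ => φ.injective.eq_iff.symm, fun R t => (φ.map_rel R (a ∘ t)).symm⟩

variable [L.IsRelational]

def Embedding.ofSameQFType {g : M → N} (h : L.SameQFType id g) : M ↪[L] N where
  toFun := g
  inj' := h.injective Function.injective_id
  map_fun' f := isEmptyElim f
  map_rel' R x := (h.2 R x).symm

theorem isUltrahomogeneous_of_forall_finite {F : Type} [L.Structure F]
    (ultra : ∀ (A : Type) [L.Structure A], Finite A → Nonempty (A ↪[L] F) →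
      ∀ f g : A ↪[L] F, ∃ h : F ≃[L] F, ∀ a : A, f a = h (g a)) :
    L.IsUltrahomogeneous F := by
  intro S hS f
  obtain ⟨h, hh⟩ := ultra S hS.finite ⟨S.subtype⟩ f S.subtype
  exact ⟨h, Embedding.ext hh⟩

theorem IsUltrahomogeneous.exists_embedding_comp_eq (hM : L.IsUltrahomogeneous M) [Finite ι]
    {a b : ι → M} (ha : Function.Injective a) (hab : L.SameQFType a b) :
    ∃ φ : M ↪[L] M, φ ∘ a = b := by
  let _ : L.Structure ι := ⟨fun f => isEmptyElim f, fun R x => RelMap R (a ∘ x)⟩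
  let fa : ι ↪[L] M := ⟨⟨a, ha⟩, fun f => isEmptyElim f, fun _ _ => Iff.rfl⟩
  let fb : ι ↪[L] M :=
    ⟨⟨b, hab.injective ha⟩, fun f => isEmptyElim f, fun R x => (hab.2 R x).symm⟩
  have : Nonempty (M ↪[L] M) := ⟨Embedding.refl L M⟩
  obtain ⟨φ, hφ⟩ := hM.extend_embedding (fg_iff_finite.2 ‹_›) fb fa
  exact ⟨φ, congrArg DFunLike.coe hφ.symm⟩

variable (L) in
def AgeStrongAmalgamation (F : Type) [L.Structure F] : Prop :=
  ∀ (A B C : Type) [L.Structure A] [L.Structure B] [L.Structure C],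
    Finite A → Finite B → Finite C →
    Nonempty (A ↪[L] F) → Nonempty (B ↪[L] F) → Nonempty (C ↪[L] F) →
    ∀ (f : A ↪[L] B) (g : A ↪[L] C),
      ∃ (D : Type) (_ : L.Structure D), Finite D ∧ Nonempty (D ↪[L] F) ∧
        ∃ (f' : B ↪[L] D) (g' : C ↪[L] D),
          (∀ a : A, f' (f a) = g' (g a)) ∧
          (Set.range fun b => f' b) ∩ (Set.range fun c => g' c) =
            (Set.range fun a : A => f' (f a)) ∧
          (Set.range fun b => f' b) ∩ (Set.range fun c => g' c) =
            (Set.range fun a : A => g' (g a))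

section StrongAmalgamation

variable {F : Type} [L.Structure F] (hF : L.IsUltrahomogeneous F)
  (hsap : L.AgeStrongAmalgamation F)
include hF hsap

theorem exists_disjoint_copy_over {B C : L.Substructure F} (hBC : B ≤ C) [Finite C] :
    ∃ ψ : C ↪[L] F,
      (∀ b : B, ψ (inclusion hBC b) = b) ∧ ∀ c : C, ψ c ∈ C → (c : F) ∈ B := by
  have : Finite B := Finite.of_injective _ (inclusion hBC).injective
  obtain ⟨D, _, -, ⟨δ⟩, f', g', hfg, -, hinter⟩ := hsap B C C ‹_› ‹_› ‹_›
    ⟨B.subtype⟩ ⟨C.subtype⟩ ⟨C.subtype⟩ (inclusion hBC) (inclusion hBC)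
  have : Nonempty (D ↪[L] F) := ⟨δ⟩
  -- normalise the first copy of `C` in `D` to be `C` itself
  obtain ⟨φ, hφ⟩ := hF.extend_embedding (fg_iff_finite.2 ‹_›) C.subtype f'
  have hφf' (c : C) : φ (f' c) = c := (congrArg (· c) hφ).symm
  refine ⟨φ.comp g', fun b => ?_, fun c hc => ?_⟩
  · change φ (g' (inclusion hBC b)) = b
    rw [← hfg, hφf']
    rfl
  · have hgc : g' c ∈ (Set.range fun c => f' c) ∩ Set.range fun c => g' c :=
      ⟨⟨⟨_, hc⟩, φ.injective (by simp [hφf'])⟩, c, rfl⟩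
    rw [hinter] at hgc
    obtain ⟨b, hb⟩ := hgc
    rw [← g'.injective hb]
    exact b.2

theorem exists_sameQFType_snoc_not_mem {n : ℕ} (a : Fin n → F) {x : F} (hx : x ∉ Set.range a)
    {s : Set F} (hs : s.Finite) : ∃ y ∉ s, L.SameQFType (Fin.snoc a x) (Fin.snoc a y) := by
  set B := closure L (Set.range a)
  set C := closure L (Set.range a ∪ insert x s)
  have : Finite C := (fg_closure ((Set.finite_range a).union (hs.insert x))).finite
  obtain ⟨ψ, hψB, hψC⟩ := exists_disjoint_copy_over hF hsap
    (closure_mono Set.subset_union_left : B ≤ C)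
  have haC (i : Fin n) : a i ∈ C := by simp [C]
  have hxC : x ∈ C := by simp [C]
  let c : Fin (n + 1) → C := Fin.snoc (fun i => ⟨a i, haC i⟩) ⟨x, hxC⟩
  have hc : C.subtype ∘ c = Fin.snoc a x := by
    simp only [c, Fin.comp_snoc]
    rfl
  have hψc : ψ ∘ c = Fin.snoc a (ψ ⟨x, hxC⟩) := by
    rw [Fin.comp_snoc]
    exact congrArg (Fin.snoc · _) (funext fun i => hψB ⟨a i, by simp⟩)
  refine ⟨ψ ⟨x, hxC⟩, fun hy => hx ?_, ?_⟩
  · simpa [B] using hψC ⟨x, hxC⟩ (by simp [hy])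
  · rw [← hc, ← hψc]
    exact (C.subtype.sameQFType_comp c).symm.trans (ψ.sameQFType_comp c)

theorem exists_sameQFType_snoc_not_mem_of_sameQFType {n : ℕ} {a b : Fin n → F}
    (ha : Function.Injective a) (hab : L.SameQFType a b) {x : F} (hx : x ∉ Set.range a)
    {s : Set F} (hs : s.Finite) : ∃ y ∉ s, L.SameQFType (Fin.snoc a x) (Fin.snoc b y) := by
  obtain ⟨φ, rfl⟩ := hF.exists_embedding_comp_eq ha hab
  have hφx : φ x ∉ Set.range (φ ∘ a) := by
    rintro ⟨i, hi⟩
    exact hx ⟨i, φ.injective hi⟩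
  obtain ⟨y, hys, hy⟩ := exists_sameQFType_snoc_not_mem hF hsap (φ ∘ a) hφx hs
  have hφ := φ.sameQFType_comp (Fin.snoc a x)
  rw [Fin.comp_snoc] at hφ
  exact ⟨y, hys, hφ.trans hy⟩

theorem exists_embedding_lt_of_lt (e : F ≃ ℕ) {r : F → ℕ} (hr : Function.Injective r) :
    ∃ g : F ↪[L] F, ∀ x y, e x < e y → r (g x) < r (g y) := by
  have hstep (n : ℕ) (v : Fin n → F) (hv : L.SameQFType (fun i : Fin n => e.symm i) v)
      (hmono : StrictMono (r ∘ v)) : ∃ y, L.SameQFType (fun i : Fin (n + 1) => e.symm i)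
        (Fin.snoc v y) ∧ StrictMono (r ∘ Fin.snoc v y) := by
    have hx : e.symm n ∉ Set.range fun i : Fin n => e.symm i := by
      rintro ⟨i, hi⟩
      exact i.2.ne (e.symm.injective hi)
    have hs : (⋃ i, r ⁻¹' Set.Iic (r (v i))).Finite :=
      Set.finite_iUnion fun i => (Set.finite_Iic _).preimage hr.injOn
    obtain ⟨y, hys, hy⟩ := exists_sameQFType_snoc_not_mem_of_sameQFType hF hsap
      (fun i j hij => Fin.ext (e.symm.injective hij)) hv hx hs
    refine ⟨y, (Fin.snoc_init_self fun i : Fin (n + 1) => e.symm i) ▸ hy, ?_⟩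
    rw [Fin.comp_snoc]
    simp only [Set.mem_iUnion, Set.mem_preimage, Set.mem_Iic, not_exists, not_le] at hys
    exact Fin.strictMono_snoc hmono hys
  obtain ⟨u, hu⟩ := exists_seq_of_forall_exists_snoc
    (fun n v => L.SameQFType (fun i : Fin n => e.symm i) v ∧ StrictMono (r ∘ v))
    ⟨⟨fun i => i.elim0, fun _ t => iff_of_eq (congrArg _ (funext fun k => (t k).elim0))⟩,
      fun i => i.elim0⟩ fun n v h => hstep n v h.1 h.2
  have hue : L.SameQFType id (u ∘ e) := by
    simpa using (sameQFType_of_forall_fin fun n => (hu n).1).comp e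
  refine ⟨Embedding.ofSameQFType hue, fun x y hxy => ?_⟩
  exact (hu (e y + 1)).2 (show (⟨e x, by omega⟩ : Fin (e y + 1)) < ⟨e y, by omega⟩ from hxy)

end StrongAmalgamation

end FirstOrder.Language

theorem stmt7_general {L : Language} [L.IsRelational]
    (F : Type) [L.Structure F]
    -- `F` is ultrahomogeneous
    (ultra : ∀ (A : Type) [L.Structure A], Finite A → Nonempty (A ↪[L] F) →
      ∀ f g : A ↪[L] F, ∃ h : F ≃[L] F, ∀ a : A, f a = h (g a))
    -- the age of `F` has the strong amalgamation property
    (sap : ∀ (A B C : Type) [L.Structure A] [L.Structure B] [L.Structure C],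
      Finite A → Finite B → Finite C →
      Nonempty (A ↪[L] F) → Nonempty (B ↪[L] F) → Nonempty (C ↪[L] F) →
      ∀ (f : A ↪[L] B) (g : A ↪[L] C),
        ∃ (D : Type) (_ : L.Structure D), Finite D ∧ Nonempty (D ↪[L] F) ∧
          ∃ (f' : B ↪[L] D) (g' : C ↪[L] D),
            (∀ a : A, f' (f a) = g' (g a)) ∧
            (Set.range fun b => f' b) ∩ (Set.range fun c => g' c) =
              (Set.range fun a : A => f' (f a)) ∧
            (Set.range fun b => f' b) ∩ (Set.range fun c => g' c) =
              (Set.range fun a : A => g' (g a)))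
    -- `⊏` is a linear order on `F` of order type `ω`
    (ltF : F → F → Prop)
    (homega : ∃ e : F ≃ ℕ, ∀ x y : F, ltF x y ↔ e x < e y)
    -- `(A, ≺)`: `A` embeds into `F` and `≺` is a linear order on `A`,
    -- with `(A,≺)` finite or of order type `ω`
    (A : Type) [L.Structure A]
    (pa : A → A → Prop)
    (t : ℕ)
    -- hypothesis: `F ⟶ (F)^A_{k,t}` for all `k ≥ 2`
    (hRam : ∀ k, 2 ≤ k → ∀ χ : (A ↪[L] F) → Fin k, ∃ w : F ↪[L] F,
      (χ '' (Set.range fun f : A ↪[L] F => w.comp f)).ncard ≤ t) :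
    -- conclusion: `(F,⊏) ⟶ ((F,⊏))^{(A,≺)}_{k,t}` for all `k ≥ 2`
    ∀ k, 2 ≤ k →
      ∀ χ : {f : A ↪[L] F // ∀ x y : A, pa x y → ltF (f x) (f y)} → Fin k,
        ∃ w : {g : F ↪[L] F // ∀ x y : F, ltF x y → ltF (g x) (g y)},
          (χ '' {p | ∃ f₀ : {f : A ↪[L] F // ∀ x y : A, pa x y → ltF (f x) (f y)},
            p.val = w.val.comp f₀.val}).ncard ≤ t := by
  classical
  intro k hk χ
  obtain ⟨e, he⟩ := homega
  let χ' (f : A ↪[L] F) : Fin k :=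
    if h : ∀ x y, pa x y → ltF (f x) (f y) then χ ⟨f, h⟩ else ⟨0, by omega⟩
  obtain ⟨w, hw⟩ := hRam k hk χ'
  obtain ⟨g, hg⟩ := Language.exists_embedding_lt_of_lt
    (Language.isUltrahomogeneous_of_forall_finite ultra) sap e
    (e.injective.comp w.injective)
  have hwg (x y : F) (h : ltF x y) : ltF (w (g x)) (w (g y)) := by
    rw [he] at h ⊢
    exact hg x y h
  refine ⟨⟨w.comp g, hwg⟩, (Set.ncard_le_ncard ?_ (Set.toFinite _)).trans hw⟩
  rintro _ ⟨p, ⟨f₀, hp⟩, rfl⟩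
  refine ⟨w.comp (g.comp f₀.1), ⟨g.comp f₀.1, rfl⟩, ?_⟩
  have hmono (x y : A) (h : pa x y) : ltF (w (g (f₀.1 x))) (w (g (f₀.1 y))) :=
    hwg _ _ (f₀.2 x y h)
  exact (dif_pos hmono).trans (congrArg χ (Subtype.ext (by rw [hp]; rfl)))

theorem stmt7 {L : Language} [L.IsRelational]
    (F : Type) [L.Structure F] [Countable F] [Infinite F]
    -- `F` is ultrahomogeneous
    (ultra : ∀ (A : Type) [L.Structure A], Finite A → Nonempty (A ↪[L] F) →
      ∀ f g : A ↪[L] F, ∃ h : F ≃[L] F, ∀ a : A, f a = h (g a))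
    -- the age of `F` has the strong amalgamation property
    (sap : ∀ (A B C : Type) [L.Structure A] [L.Structure B] [L.Structure C],
      Finite A → Finite B → Finite C →
      Nonempty (A ↪[L] F) → Nonempty (B ↪[L] F) → Nonempty (C ↪[L] F) →
      ∀ (f : A ↪[L] B) (g : A ↪[L] C),
        ∃ (D : Type) (_ : L.Structure D), Finite D ∧ Nonempty (D ↪[L] F) ∧
          ∃ (f' : B ↪[L] D) (g' : C ↪[L] D),
            (∀ a : A, f' (f a) = g' (g a)) ∧
            (Set.range fun b => f' b) ∩ (Set.range fun c => g' c) =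
              (Set.range fun a : A => f' (f a)) ∧
            (Set.range fun b => f' b) ∩ (Set.range fun c => g' c) =
              (Set.range fun a : A => g' (g a)))
    -- `⊏` is a linear order on `F` of order type `ω`
    (ltF : F → F → Prop) (hltF : IsStrictTotalOrder F ltF)
    (homega : ∃ e : F ≃ ℕ, ∀ x y : F, ltF x y ↔ e x < e y)
    -- `(A, ≺)`: `A` embeds into `F` and `≺` is a linear order on `A`,
    -- with `(A,≺)` finite or of order type `ω`
    (A : Type) [L.Structure A] (hAc : Countable A) (hAF : Nonempty (A ↪[L] F))
    (pa : A → A → Prop) (hpa : IsStrictTotalOrder A pa)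
    (hK : Finite A ∨ ∃ e : A ≃ ℕ, ∀ x y : A, pa x y ↔ e x < e y)
    (t : ℕ) (ht : 1 ≤ t)
    -- hypothesis: `F ⟶ (F)^A_{k,t}` for all `k ≥ 2`
    (hRam : ∀ k, 2 ≤ k → ∀ χ : (A ↪[L] F) → Fin k, ∃ w : F ↪[L] F,
      (χ '' (Set.range fun f : A ↪[L] F => w.comp f)).ncard ≤ t) :
    -- conclusion: `(F,⊏) ⟶ ((F,⊏))^{(A,≺)}_{k,t}` for all `k ≥ 2`
    ∀ k, 2 ≤ k →
      ∀ χ : {f : A ↪[L] F // ∀ x y : A, pa x y → ltF (f x) (f y)} → Fin k,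
        ∃ w : {g : F ↪[L] F // ∀ x y : F, ltF x y → ltF (g x) (g y)},
          (χ '' {p | ∃ f₀ : {f : A ↪[L] F // ∀ x y : A, pa x y → ltF (f x) (f y)},
            p.val = w.val.comp f₀.val}).ncard ≤ t :=
  stmt7_general F ultra sap ltF homega A pa t hRam
end

section
/- Let S = {0 = s₀ < s₁ < … < s_n} be a finite set of nonnegative reals and let x, y ∈ S∖{0}. If |x − y| ≤ s₁, then x ≈ y, i.e., x and y lie in the same block of S. -/
/-- `s` is a jump number of the finite set `S = {0 = s₀ < s₁ < … < s_n}`: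
either `s` is the largest element, or `2·s` is smaller than the next element
of `S` (equivalently, smaller than every element of `S` above `s`). -/
def JumpNumber (S : Finset ℝ) (s : ℝ) : Prop :=
  s ∈ S ∧ ∀ t ∈ S, s < t → 2 * s < t

/-- `x ≈ y`: `x` and `y` lie in the same block of `S`.  The blocks of `S` are
`{0}` together with the sets `S ∩ (s_i, s_j]` for consecutive jump numbers
`s_i < s_j`; for nonzero `x ≤ y` this amounts to saying that no jump number
lies in `[x, y)`. -/
def SameBlock (S : Finset ℝ) (x y : ℝ) : Prop :=
  x ∈ S ∧ y ∈ S ∧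
    ((x = 0 ∧ y = 0) ∨
      (x ≠ 0 ∧ y ≠ 0 ∧ ∀ j, JumpNumber S j → ¬ (min x y ≤ j ∧ j < max x y)))

theorem stmt13 (S : Finset ℝ) (h0 : (0 : ℝ) ∈ S) (hnn : ∀ s ∈ S, 0 ≤ s)
    (s1 : ℝ) (hs1S : s1 ∈ S) (hs1pos : 0 < s1)
    (hs1min : ∀ s ∈ S, s ≠ 0 → s1 ≤ s)
    (x y : ℝ) (hx : x ∈ S) (hy : y ∈ S) (hx0 : x ≠ 0) (hy0 : y ≠ 0)
    (h : |x - y| ≤ s1) : SameBlock S x y := by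
  refine ⟨hx, hy, Or.inr ⟨hx0, hy0, ?_⟩⟩
  rintro j ⟨hjS, hjump⟩ ⟨hmin, hmax⟩
  have hd : max x y - min x y ≤ s1 := by
    rw [abs_sub_le_iff] at h
    rcases le_total x y with hxy | hxy <;>
      simp [min_eq_left, max_eq_right, min_eq_right, max_eq_left, hxy] <;> linarith [h.1, h.2]
  have hmS : min x y ∈ S := by rcases le_total x y with hxy | hxy <;> simp [hxy, hx, hy]
  have hMS : max x y ∈ S := by rcases le_total x y with hxy | hxy <;> simp [hxy, hx, hy]
  have hm0 : min x y ≠ 0 := by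
    rcases le_total x y with hxy | hxy <;> simp [hxy, hx0, hy0]
  have hs1m : s1 ≤ min x y := hs1min _ hmS hm0
  have h2j : 2 * j < max x y := hjump _ hMS hmax
  linarith
end

section
/- Let S = {0 = s₀ < s₁ < … < s_n} be a compact distance set and let a, b, c ∈ S∖{0} with a ≤ b ≤ c. Then (a, b, c) is a metric triple if and only if either a ≈ b ≈ c, or a ≪ b and b ≈ c. -/
/-- `x ≪ y`: the block of `S` containing `x` consists of smaller reals than the
block containing `y` (for nonzero `x, y ∈ S`). -/
def BlockLT (S : Finset ℝ) (x y : ℝ) : Prop :=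
  x ∈ S ∧ y ∈ S ∧ x ≠ 0 ∧ y ≠ 0 ∧
    ∀ a ∈ S, ∀ b ∈ S, SameBlock S a x → SameBlock S b y → a < b

/-- `S` is a compact distance set: for nonzero `x, y ∈ S`,
`|x − y| ≤ s₁` iff `x ≈ y`. -/
def CompactDistanceSet (S : Finset ℝ) (s1 : ℝ) : Prop :=
  ∀ x ∈ S, ∀ y ∈ S, x ≠ 0 → y ≠ 0 → (|x - y| ≤ s1 ↔ SameBlock S x y)

/-- `(a,b,c)` is a metric triple. -/
def MetricTriple (a b c : ℝ) : Prop :=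
  c ≤ a + b ∧ a ≤ b + c ∧ b ≤ c + a

lemma sameBlock_refl (S : Finset ℝ) {x : ℝ} (hx : x ∈ S) (hx0 : x ≠ 0) :
    SameBlock S x x :=
  ⟨hx, hx, Or.inr ⟨hx0, hx0, fun j _ hcon => by
    simp only [min_self, max_self] at hcon; linarith [hcon.1, hcon.2]⟩⟩

lemma jump_of_not_sameBlock (S : Finset ℝ) {x y : ℝ} (hx : x ∈ S) (hy : y ∈ S)
    (hx0 : x ≠ 0) (hy0 : y ≠ 0) (hxy : x < y) (hn : ¬ SameBlock S x y) :
    ∃ j, JumpNumber S j ∧ x ≤ j ∧ j < y := by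
  by_contra h2
  push_neg at h2
  apply hn
  refine ⟨hx, hy, Or.inr ⟨hx0, hy0, fun j hj hcon => ?_⟩⟩
  rw [min_eq_left hxy.le, max_eq_right hxy.le] at hcon
  exact absurd hcon.2 (not_lt.mpr (h2 j hj hcon.1))

theorem stmt14 (S : Finset ℝ) (h0 : (0 : ℝ) ∈ S) (hnn : ∀ s ∈ S, 0 ≤ s)
    (s1 : ℝ) (hs1S : s1 ∈ S) (hs1pos : 0 < s1)
    (hs1min : ∀ s ∈ S, s ≠ 0 → s1 ≤ s)
    (hcds : CompactDistanceSet S s1)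
    (a b c : ℝ) (ha : a ∈ S) (hb : b ∈ S) (hc : c ∈ S)
    (ha0 : a ≠ 0) (hb0 : b ≠ 0) (hc0 : c ≠ 0)
    (hab : a ≤ b) (hbc : b ≤ c) :
    MetricTriple a b c ↔
      (SameBlock S a b ∧ SameBlock S b c) ∨ (BlockLT S a b ∧ SameBlock S b c) := by
  constructor
  · rintro ⟨h1, -, -⟩
    -- first: b and c are in the same block
    have hbcB : SameBlock S b c := by
      rcases eq_or_lt_of_le hbc with heq | hlt
      · subst heq; exact sameBlock_refl S hb hb0
      · by_contra hn
        obtain ⟨j, hj, hbj, hjc⟩ := jump_of_not_sameBlock S hb hc hb0 hc0 hlt hn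
        have := hj.2 c hc hjc
        linarith
    by_cases habB : SameBlock S a b
    · exact Or.inl ⟨habB, hbcB⟩
    · refine Or.inr ⟨⟨ha, hb, ha0, hb0, ?_⟩, hbcB⟩
      have hlt : a < b := by
        rcases eq_or_lt_of_le hab with heq | hlt
        · exact absurd (heq ▸ sameBlock_refl S ha ha0) habB
        · exact hlt
      obtain ⟨j, hj, haj, hjb⟩ := jump_of_not_sameBlock S ha hb ha0 hb0 hlt habB
      intro x hx y hy hxa hyb
      have hxj : x ≤ j := by
        by_contra hgt
        push_neg at hgt
        rcases hxa.2.2 with ⟨-, ha0'⟩ | ⟨-, -, hall⟩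
        · exact ha0 ha0'
        · exact hall j hj ⟨min_le_of_right_le haj, lt_of_lt_of_le hgt (le_max_left x a)⟩
      have hjy : j < y := by
        by_contra hle
        push_neg at hle
        rcases hyb.2.2 with ⟨-, hb0'⟩ | ⟨-, -, hall⟩
        · exact hb0 hb0'
        · exact hall j hj ⟨min_le_of_left_le hle, lt_of_lt_of_le hjb (le_max_right y b)⟩
      linarith
  · rintro (⟨-, hbcB⟩ | ⟨-, hbcB⟩) <;>
    · have hd : |b - c| ≤ s1 := (hcds b hb c hc hb0 hc0).mpr hbcB
      rw [abs_le] at hd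
      have h1 : s1 ≤ a := hs1min a ha ha0
      exact ⟨by linarith [hd.1], by linarith, by linarith⟩
end

section
/- Every compact distance set S = {0 = s₀ < s₁ < … < s_n} satisfies the 4-values condition: for all a, b, c, d ∈ S∖{0}, if there is p ∈ S∖{0} such that (a, b, p) and (c, d, p) are metric triples, then there is q ∈ S∖{0} such that (a, c, q) and (b, d, q) are metric triples. -/
lemma exists_jump_aux (S : Finset ℝ) (s1 : ℝ) (hs1pos : 0 < s1)
    (hcds : CompactDistanceSet S s1) (x y : ℝ) (hx : x ∈ S) (hy : y ∈ S)
    (hx0 : x ≠ 0) (hy0 : y ≠ 0) (hlt : s1 < y - x) :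
    ∃ j, JumpNumber S j ∧ x ≤ j ∧ j < y := by
  by_contra h
  push_neg at h
  have hxy : x < y := by linarith
  have hsb : SameBlock S x y := by
    refine ⟨hx, hy, Or.inr ⟨hx0, hy0, fun j hj hcc => ?_⟩⟩
    rw [min_eq_left hxy.le, max_eq_right hxy.le] at hcc
    exact absurd hcc.2 (not_lt.mpr (h j hj hcc.1))
  have habs := (hcds x hx y hy hx0 hy0).mpr hsb
  rw [abs_le] at habs
  linarith [habs.1]

lemma metricTriple_swap {a b c : ℝ} (h : MetricTriple a b c) : MetricTriple b a c := by
  obtain ⟨h1, h2, h3⟩ := h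
  exact ⟨by linarith, by linarith, by linarith⟩

lemma key_aux (S : Finset ℝ) (hnn : ∀ s ∈ S, 0 ≤ s)
    (s1 : ℝ) (hs1S : s1 ∈ S) (hs1pos : 0 < s1)
    (hs1min : ∀ s ∈ S, s ≠ 0 → s1 ≤ s)
    (hcds : CompactDistanceSet S s1)
    (a b c d p : ℝ) (ha : a ∈ S) (hb : b ∈ S) (hc : c ∈ S) (hd : d ∈ S)
    (hpS : p ∈ S)
    (ha0 : a ≠ 0) (hb0 : b ≠ 0) (hc0 : c ≠ 0) (hd0 : d ≠ 0)
    (t1 : MetricTriple a b p) (t2 : MetricTriple c d p)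
    (q : ℝ) (hqS : q ∈ S)
    (hqmax : ∀ s ∈ S, s ≤ a + c → s ≤ b + d → s ≤ q) :
    b - d ≤ q := by
  by_contra hcon
  push_neg at hcon
  have h0a := hnn a ha
  have h0b := hnn b hb
  have h0c := hnn c hc
  have h0d := hnn d hd
  have hs1a := hs1min a ha ha0
  have hs1b := hs1min b hb hb0
  have hs1c := hs1min c hc hc0
  have hs1d := hs1min d hd hd0
  have hbpa : b ≤ p + a := t1.2.2
  have hpcd : p ≤ c + d := t2.1
  have hbd_ac : b - d ≤ a + c := by linarith
  have hs1q : s1 ≤ q := hqmax s1 hs1S (by linarith) (by linarith)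
  have hq0 : q ≠ 0 := ne_of_gt (lt_of_lt_of_le hs1pos hs1q)
  -- b > a + c
  have hbig : a + c < b := by
    by_contra h
    push_neg at h
    have := hqmax b hb h (by linarith)
    linarith
  -- jump between d and b
  obtain ⟨j, hj, hdj, hjb⟩ := exists_jump_aux S s1 hs1pos hcds d b hd hb hd0 hb0 (by linarith)
  have h2jb : 2 * j < b := hj.2 b hb hjb
  have hjac : j ≤ a + c := by
    by_contra h
    push_neg at h
    linarith
  have hjq : j ≤ q := hqmax j hj.1 hjac (by linarith)
  have hdac : d ≤ a + c := le_trans hdj hjac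
  -- jump between c and b
  obtain ⟨j3, hj3, hcj3, hj3b⟩ := exists_jump_aux S s1 hs1pos hcds c b hc hb hc0 hb0 (by linarith)
  have h2j3b : 2 * j3 < b := hj3.2 b hb hj3b
  have hj3ac : j3 ≤ a + c := by
    by_contra h
    push_neg at h
    linarith
  -- p ≤ a + c
  have hpac : p ≤ a + c := by
    by_contra h
    push_neg at h
    have h1 : 2 * j3 < p := hj3.2 p hpS (by linarith)
    have h2 : 2 * j < p := hj.2 p hpS (by linarith)
    linarith
  have hpq : p ≤ q := hqmax p hpS hpac (by linarith)
  -- jump between q and b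
  obtain ⟨j4, hj4, hqj4, hj4b⟩ := exists_jump_aux S s1 hs1pos hcds q b hqS hb hq0 hb0 (by linarith)
  have h2j4 : 2 * j4 < b := hj4.2 b hb hj4b
  have hj4ac : j4 ≤ a + c := by
    by_contra h
    push_neg at h
    linarith
  have hj4q : j4 ≤ q := hqmax j4 hj4.1 hj4ac (by linarith)
  have hj4eq : j4 = q := le_antisymm hj4q hqj4
  have haq : a ≤ q := hqmax a ha (by linarith) (by linarith)
  rw [hj4eq] at h2j4
  linarith

theorem stmt15 (S : Finset ℝ) (h0 : (0 : ℝ) ∈ S) (hnn : ∀ s ∈ S, 0 ≤ s)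
    (s1 : ℝ) (hs1S : s1 ∈ S) (hs1pos : 0 < s1)
    (hs1min : ∀ s ∈ S, s ≠ 0 → s1 ≤ s)
    (hcds : CompactDistanceSet S s1)
    (a b c d : ℝ) (ha : a ∈ S) (hb : b ∈ S) (hc : c ∈ S) (hd : d ∈ S)
    (ha0 : a ≠ 0) (hb0 : b ≠ 0) (hc0 : c ≠ 0) (hd0 : d ≠ 0)
    (hp : ∃ p ∈ S, p ≠ 0 ∧ MetricTriple a b p ∧ MetricTriple c d p) :
    ∃ q ∈ S, q ≠ 0 ∧ MetricTriple a c q ∧ MetricTriple b d q := by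
  obtain ⟨p, hpS, hp0, t1, t2⟩ := hp
  have h0a := hnn a ha
  have h0b := hnn b hb
  have h0c := hnn c hc
  have h0d := hnn d hd
  have hs1a := hs1min a ha ha0
  have hs1b := hs1min b hb hb0
  have hne : (S.filter (fun t => t ≤ min (a + c) (b + d))).Nonempty := by
    refine ⟨s1, Finset.mem_filter.mpr ⟨hs1S, le_min (by linarith) (by linarith)⟩⟩
  set q : ℝ := (S.filter (fun t => t ≤ min (a + c) (b + d))).max' hne with hqdef
  have hqmem := Finset.mem_filter.mp ((S.filter (fun t => t ≤ min (a + c) (b + d))).max'_mem hne)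
  have hqS : q ∈ S := hqmem.1
  have hqU : q ≤ min (a + c) (b + d) := hqmem.2
  have hq1 : q ≤ a + c := hqU.trans (min_le_left _ _)
  have hq2 : q ≤ b + d := hqU.trans (min_le_right _ _)
  have hqmax : ∀ s ∈ S, s ≤ a + c → s ≤ b + d → s ≤ q := by
    intro x hxS h1 h2
    rw [hqdef]
    refine Finset.le_max' _ x ?_
    simp only [Finset.mem_filter]
    exact ⟨hxS, le_min h1 h2⟩
  have hs1q : s1 ≤ q := hqmax s1 hs1S (by linarith) (by linarith)
  have hq0 : q ≠ 0 := ne_of_gt (lt_of_lt_of_le hs1pos hs1q)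
  have k1 : b - d ≤ q :=
    key_aux S hnn s1 hs1S hs1pos hs1min hcds a b c d p ha hb hc hd hpS
      ha0 hb0 hc0 hd0 t1 t2 q hqS hqmax
  have k2 : d - b ≤ q :=
    key_aux S hnn s1 hs1S hs1pos hs1min hcds c d a b p hc hd ha hb hpS
      hc0 hd0 ha0 hb0 t2 t1 q hqS
      (fun s hsS h1 h2 => hqmax s hsS (by linarith) (by linarith))
  have k3 : a - c ≤ q :=
    key_aux S hnn s1 hs1S hs1pos hs1min hcds b a d c p hb ha hd hc hpS
      hb0 ha0 hd0 hc0 (metricTriple_swap t1) (metricTriple_swap t2) q hqS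
      (fun s hsS h1 h2 => hqmax s hsS (by linarith) (by linarith))
  have k4 : c - a ≤ q :=
    key_aux S hnn s1 hs1S hs1pos hs1min hcds d c b a p hd hc hb ha hpS
      hd0 hc0 hb0 ha0 (metricTriple_swap t2) (metricTriple_swap t1) q hqS
      (fun s hsS h1 h2 => hqmax s hsS (by linarith) (by linarith))
  exact ⟨q, hqS, hq0, ⟨hq1, by linarith, by linarith⟩, ⟨hq2, by linarith, by linarith⟩⟩
end

section
/- Let S = {0 = s₀ < s₁ < … < s_n} be a compact distance set with blocks {0}, B₁, …, B_k, and let M = (M, d) be an S-metric space. Define x ∼ y iff d(x,y) ∈ {0} ∪ B₁ (this is an equivalence relation on M). If x ∼ u and y ∼ v, then either both d(x,y) and d(u,v) belong to {0} ∪ B₁, or d(x,y) ≈ d(u,v) (i.e., d(x,y) and d(u,v) lie in the same block of S). -/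
/-- `d ∈ {0} ∪ B₁`, where `B₁` is the first nontrivial block of `S`
(the block of the least nonzero element `s₁`). -/
def InLowBlock (S : Finset ℝ) (s1 d : ℝ) : Prop :=
  d = 0 ∨ SameBlock S d s1

section aux
variable {S : Finset ℝ} {s1 : ℝ}

/-- low elements are ≤ 2 s1 -/
lemma aux_low_le (hs1S : s1 ∈ S) (hs1pos : 0 < s1)
    (hcds : CompactDistanceSet S s1) {d : ℝ} (h : InLowBlock S s1 d) :
    d ≤ 2 * s1 := by
  rcases h with h | h
  · linarith
  · have hd0 : d ≠ 0 := by
      rcases h.2.2 with ⟨_, h1⟩ | ⟨h1, _⟩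
      · exact absurd h1 (ne_of_gt hs1pos)
      · exact h1
    have := (hcds d h.1 s1 hs1S hd0 (ne_of_gt hs1pos)).2 h
    rcases abs_le.mp this with ⟨_, h2⟩
    linarith

/-- elements of S that are ≤ 2 s1 are low -/
lemma aux_le_low (hs1S : s1 ∈ S) (hs1pos : 0 < s1)
    (hs1min : ∀ s ∈ S, s ≠ 0 → s1 ≤ s)
    (hcds : CompactDistanceSet S s1) {d : ℝ} (hdS : d ∈ S)
    (h : d ≤ 2 * s1) : InLowBlock S s1 d := by
  by_cases hd0 : d = 0
  · exact Or.inl hd0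
  · have h1 : s1 ≤ d := hs1min d hdS hd0
    refine Or.inr ((hcds d hdS s1 hs1S hd0 (ne_of_gt hs1pos)).1 ?_)
    rw [abs_le]; constructor <;> linarith

/-- if d ∈ S is not low, then 2 s1 < d and there is a jump j with s1 ≤ j < d -/
lemma aux_not_low (hs1S : s1 ∈ S) (hs1pos : 0 < s1)
    (hs1min : ∀ s ∈ S, s ≠ 0 → s1 ≤ s)
    (hcds : CompactDistanceSet S s1) {d : ℝ} (hdS : d ∈ S)
    (h : ¬ InLowBlock S s1 d) :
    2 * s1 < d ∧ ∃ j, JumpNumber S j ∧ s1 ≤ j ∧ j < d := by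
  have hd0 : d ≠ 0 := fun h' => h (Or.inl h')
  have h1 : s1 ≤ d := hs1min d hdS hd0
  have hgt : 2 * s1 < d := by
    by_contra hle
    exact h (aux_le_low hs1S hs1pos hs1min hcds hdS (by linarith))
  refine ⟨hgt, ?_⟩
  have hnsb : ¬ SameBlock S d s1 := fun h' => h (Or.inr h')
  have : ¬ ∀ j, JumpNumber S j → ¬ (min d s1 ≤ j ∧ j < max d s1) := by
    intro hall
    exact hnsb ⟨hdS, hs1S, Or.inr ⟨hd0, ne_of_gt hs1pos, hall⟩⟩
  push_neg at this
  obtain ⟨j, hj, hj1, hj2⟩ := this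
  rw [min_eq_right h1] at hj1
  rw [max_eq_left h1] at hj2
  exact ⟨j, hj, hj1, hj2⟩

/-- a low element is ≤ any jump number j with s1 ≤ j -/
lemma aux_low_le_jump (hs1S : s1 ∈ S) (hs1pos : 0 < s1)
    (hcds : CompactDistanceSet S s1) {d j : ℝ}
    (h : InLowBlock S s1 d) (hj : JumpNumber S j) (hjs : s1 ≤ j) :
    d ≤ j := by
  have hd2 : d ≤ 2 * s1 := aux_low_le hs1S hs1pos hcds h
  rcases h with h | h
  · linarith
  · by_contra hgt
    push_neg at hgt
    have := hj.2 d h.1 hgt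
    linarith

/-- transitivity core: triangle-type inequality preserves lowness -/
lemma aux_trans (hs1S : s1 ∈ S) (hs1pos : 0 < s1)
    (hs1min : ∀ s ∈ S, s ≠ 0 → s1 ≤ s)
    (hcds : CompactDistanceSet S s1) {a b t : ℝ}
    (htS : t ∈ S) (htri : t ≤ a + b)
    (ha : InLowBlock S s1 a) (hb : InLowBlock S s1 b) :
    InLowBlock S s1 t := by
  by_contra h
  obtain ⟨hgt, j, hj, hjs, hjt⟩ := aux_not_low hs1S hs1pos hs1min hcds htS h
  have h1 : a ≤ j := aux_low_le_jump hs1S hs1pos hcds ha hj hjs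
  have h2 : b ≤ j := aux_low_le_jump hs1S hs1pos hcds hb hj hjs
  have := hj.2 t htS hjt
  linarith

/-- key: no jump can separate a and b when both arise as above -/
lemma aux_key (hs1S : s1 ∈ S) (hs1pos : 0 < s1)
    (hs1min : ∀ s ∈ S, s ≠ 0 → s1 ≤ s)
    (hcds : CompactDistanceSet S s1) {a b c1 c2 j : ℝ}
    (haS : a ∈ S) (hbS : b ∈ S)
    (hna : ¬ InLowBlock S s1 a)
    (hc1 : InLowBlock S s1 c1) (hc2 : InLowBlock S s1 c2)
    (htri : b ≤ a + c1 + c2)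
    (hj : JumpNumber S j) (h1 : a ≤ j) (h2 : j < b) : False := by
  obtain ⟨hgt, j1, hj1, hj1s, hj1a⟩ := aux_not_low hs1S hs1pos hs1min hcds haS hna
  have e1 : c1 ≤ j1 := aux_low_le_jump hs1S hs1pos hcds hc1 hj1 hj1s
  have e2 : c2 ≤ j1 := aux_low_le_jump hs1S hs1pos hcds hc2 hj1 hj1s
  have e3 : 2 * j1 < a := hj1.2 a haS hj1a
  have e4 : 2 * j < b := hj.2 b hbS h2
  linarith

end aux

theorem stmt17 (S : Finset ℝ) (h0 : (0 : ℝ) ∈ S) (hnn : ∀ s ∈ S, 0 ≤ s)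
    (s1 : ℝ) (hs1S : s1 ∈ S) (hs1pos : 0 < s1)
    (hs1min : ∀ s ∈ S, s ≠ 0 → s1 ≤ s)
    (hcds : CompactDistanceSet S s1)
    -- `M` is an `S`-metric space
    (M : Type) [MetricSpace M] (hMS : ∀ x y : M, dist x y ∈ S)
    (x y u v : M) :
    -- `∼` is an equivalence relation on `M`
    Equivalence (fun a b : M => InLowBlock S s1 (dist a b)) ∧
    -- if `x ∼ u` and `y ∼ v` then either both `d(x,y)` and `d(u,v)` lie in
    -- `{0} ∪ B₁`, or `d(x,y) ≈ d(u,v)`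
    (InLowBlock S s1 (dist x u) → InLowBlock S s1 (dist y v) →
      (InLowBlock S s1 (dist x y) ∧ InLowBlock S s1 (dist u v)) ∨
        SameBlock S (dist x y) (dist u v)) := by
  have htrans : ∀ a b c : M, InLowBlock S s1 (dist a b) →
      InLowBlock S s1 (dist b c) → InLowBlock S s1 (dist a c) := by
    intro a b c hab hbc
    exact aux_trans hs1S hs1pos hs1min hcds (hMS a c) (dist_triangle a b c) hab hbc
  have hsymm : ∀ a b : M, InLowBlock S s1 (dist a b) →
      InLowBlock S s1 (dist b a) := by
    intro a b h; rwa [dist_comm]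
  constructor
  · exact ⟨fun a => Or.inl (dist_self a), fun {a b} h => hsymm a b h,
      fun {a b c} h1 h2 => htrans a b c h1 h2⟩
  · intro hxu hyv
    by_cases hxy : InLowBlock S s1 (dist x y)
    · exact Or.inl ⟨hxy, htrans u x v (hsymm x u hxu) (htrans x y v hxy hyv)⟩
    by_cases huv : InLowBlock S s1 (dist u v)
    · exact Or.inl ⟨htrans x u y hxu (htrans u v y huv (hsymm y v hyv)), huv⟩
    have hxy0 : dist x y ≠ 0 := fun h => hxy (Or.inl h)
    have huv0 : dist u v ≠ 0 := fun h => huv (Or.inl h)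
    refine Or.inr ⟨hMS x y, hMS u v, Or.inr ⟨hxy0, huv0, ?_⟩⟩
    rintro j hj ⟨hmin, hmax⟩
    rcases lt_trichotomy (dist x y) (dist u v) with hlt | heq | hgt
    · rw [min_eq_left hlt.le] at hmin
      rw [max_eq_right hlt.le] at hmax
      have t1 := dist_triangle u x v
      have t2 := dist_triangle x y v
      have c1 : dist u x = dist x u := dist_comm u x
      have htri : dist u v ≤ dist x y + dist x u + dist y v := by linarith
      exact aux_key hs1S hs1pos hs1min hcds (hMS x y) (hMS u v) hxy hxu hyv htri
        hj hmin hmax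
    · rw [heq, min_self] at hmin
      rw [heq, max_self] at hmax
      exact absurd hmin (not_le.mpr hmax)
    · rw [min_eq_right hgt.le] at hmin
      rw [max_eq_left hgt.le] at hmax
      have t1 := dist_triangle x u y
      have t2 := dist_triangle u v y
      have c1 : dist v y = dist y v := dist_comm v y
      have htri : dist x y ≤ dist u v + dist x u + dist y v := by linarith
      exact aux_key hs1S hs1pos hs1min hcds (hMS u v) (hMS x y) huv hxu hyv htri
        hj hmin hmax
end
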